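/- arXiv:math/0304198 — 5 statements merged into one kernel-verified Lean document; each statement's English description precedes it below -/
import Mathlib

section
/- For all positive integers m, n with m + n > 1 (excluding m = n = 1), the cells of an m × n matrix can be filled with the distinct integers 1,...,mn such that all m + n row sums and column sums are pairwise distinct. -/
open Finset

open Finset

private def Bsum (n : ℕ) : ℕ := ∑ j : Fin n, ((j : ℕ) + 1)
private def Asum (m : ℕ) : ℕ := ∑ i : Fin m, (i : ℕ)

lemma Asum_two (m : ℕ) : 2 * Asum m = m * (m - 1) := by
  unfold Asum
  rw [Fin.sum_univ_eq_sum_range (fun i => i) m, mul_comm]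
  exact Finset.sum_range_id_mul_two m

lemma Bsum_two (n : ℕ) : 2 * Bsum n = n * (n + 1) := by
  unfold Bsum
  rw [Fin.sum_univ_eq_sum_range (fun j => j + 1) n, Finset.sum_add_distrib,
    Finset.sum_const, Finset.card_range, smul_eq_mul, mul_one, Nat.mul_add,
    mul_comm 2, Finset.sum_range_id_mul_two n]
  cases n with
  | zero => rfl
  | succ k => simp [Nat.succ_sub_one]; ring

lemma sum_row (m n : ℕ) (i : Fin m) :
    ∑ j : Fin n, ((i : ℕ) * n + (j : ℕ) + 1) = (i : ℕ) * (n * n) + Bsum n := by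
  unfold Bsum
  rw [show (fun j : Fin n => (i : ℕ) * n + (j : ℕ) + 1) = fun j : Fin n => (i : ℕ) * n + ((j : ℕ) + 1) by funext j; ring]
  rw [Finset.sum_add_distrib, Finset.sum_const, Finset.card_univ, Fintype.card_fin]
  ring

lemma sum_col (m n : ℕ) (j : Fin n) :
    ∑ i : Fin m, ((i : ℕ) * n + (j : ℕ) + 1) = Asum m * n + m * ((j : ℕ) + 1) := by
  unfold Asum
  rw [show (fun i : Fin m => (i : ℕ) * n + (j : ℕ) + 1) = fun i : Fin m => (i : ℕ) * n + ((j : ℕ) + 1) by funext i; ring]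
  rw [Finset.sum_add_distrib, Finset.sum_const, Finset.card_univ, Fintype.card_fin,
    ← Finset.sum_mul]
  ring

open Finset

lemma rm_bijOn (m n : ℕ) (hn : 0 < n) :
    Set.BijOn (fun p : Fin m × Fin n => (p.1 : ℕ) * n + (p.2 : ℕ) + 1)
      Set.univ ↑(Finset.Icc 1 (m * n)) := by
  refine ⟨?_, ?_, ?_⟩
  · rintro ⟨i, j⟩ -
    simp only [Finset.coe_Icc, Set.mem_Icc]
    refine ⟨by omega, ?_⟩
    have hi : (i : ℕ) ≤ m - 1 := by have := i.2; omega
    have hj : (j : ℕ) ≤ n - 1 := by have := j.2; omega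
    have h1 : (i : ℕ) * n ≤ (m - 1) * n := Nat.mul_le_mul_right n hi
    have h2 : (m - 1) * n + n = m * n := by
      have : 1 ≤ m := by have := i.2; omega
      rw [Nat.sub_one_mul]
      have : n ≤ m * n := Nat.le_mul_of_pos_left n (by omega)
      omega
    omega
  · rintro ⟨i, j⟩ - ⟨i', j'⟩ - hval0
    have hval : (i : ℕ) * n + (j : ℕ) + 1 = (i' : ℕ) * n + (j' : ℕ) + 1 := hval0
    clear hval0
    have hj := j.2
    have hj' := j'.2
    have hii : (i : ℕ) = i' := by
      rcases lt_trichotomy (i : ℕ) (i' : ℕ) with hlt | heq | hgt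
      · have h1 : (i : ℕ) * n + n ≤ (i' : ℕ) * n := by
          calc (i : ℕ) * n + n = ((i : ℕ) + 1) * n := by ring
          _ ≤ (i' : ℕ) * n := Nat.mul_le_mul_right n (by omega)
        linarith
      · exact heq
      · have h1 : (i' : ℕ) * n + n ≤ (i : ℕ) * n := by
          calc (i' : ℕ) * n + n = ((i' : ℕ) + 1) * n := by ring
          _ ≤ (i : ℕ) * n := Nat.mul_le_mul_right n (by omega)
        linarith
    have : (j : ℕ) = j' := by
      have h2 : (i : ℕ) * n = (i' : ℕ) * n := by rw [hii]
      omega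
    exact Prod.ext (Fin.ext hii) (Fin.ext this)
  · intro v hv
    simp only [Finset.coe_Icc, Set.mem_Icc] at hv
    refine ⟨(⟨(v - 1) / n, ?_⟩, ⟨(v - 1) % n, Nat.mod_lt _ hn⟩), Set.mem_univ _, ?_⟩
    · rw [Nat.div_lt_iff_lt_mul hn]
      have : 0 < m * n := by
        rcases Nat.eq_zero_or_pos (m * n) with h0 | h0
        · omega
        · exact h0
      omega
    · simp only
      have hd := Nat.div_add_mod (v - 1) n
      rw [mul_comm]
      omega

lemma doubled (m n i s t : ℕ) (h : i*(n*n) + Bsum n + s = Asum m * n + t) :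
    2*i*(n*n) + (n*n + n) + 2*s = m*(m-1)*n + 2*t := by
  have hA : (2 * Asum m) * n = (m * (m-1)) * n := congrArg (· * n) (Asum_two m)
  have hB := Bsum_two n
  nlinarith [h, hA, hB]

lemma undoubled (m n i t : ℕ) (h : 2*i*(n*n) + (n*n + n) = m*(m-1)*n + 2*t) :
    i*(n*n) + Bsum n = Asum m * n + t := by
  have hA : (2 * Asum m) * n = (m * (m-1)) * n := congrArg (· * n) (Asum_two m)
  have hB := Bsum_two n
  nlinarith [h, hA, hB]

lemma mul_ne_mul_add_one {m : ℕ} (hm : 2 ≤ m) (a b : ℕ) : m*a ≠ m*b + 1 := by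
  intro hcon
  have h1 : (m*a) % m = 0 := Nat.mul_mod_right m a
  have h2 : (m*b + 1) % m = 1 := by
    rw [Nat.add_comm, Nat.add_mul_mod_self_left]
    exact Nat.mod_eq_of_lt (by omega)
  rw [hcon, h2] at h1
  omega

-- auxiliary: if a collision exists, gcd (n*n) m divides n
lemma coll_dvd (m n i j : ℕ)
    (h1 : 2*i*(n*n) + (n*n + n) = m*(m-1)*n + 2*(m*(j+1))) :
    Nat.gcd (n*n) m ∣ n := by
  have e : 2*i*(n*n) + (n*n + n) = 2*i*(n*n) + n*n + n := by ring
  rw [e] at h1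
  have e2 : m*(m-1)*n + 2*(m*(j+1)) = m*(m-1)*n + 2*m*(j+1) := by ring
  rw [e2] at h1
  set d := Nat.gcd (n*n) m with hd
  have hd1 : d ∣ n*n := Nat.gcd_dvd_left _ _
  have hd2 : d ∣ m := Nat.gcd_dvd_right _ _
  have h3 : d ∣ 2*i*(n*n) + n*n := dvd_add (hd1.mul_left (2*i)) hd1
  have h4 : d ∣ m*(m-1)*n + 2*m*(j+1) :=
    dvd_add ((hd2.mul_right (m-1)).mul_right n) ((hd2.mul_left 2).mul_right (j+1))
  have h5 : d ∣ 2*i*(n*n) + n*n + n := by rw [h1]; exact h4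
  exact (Nat.dvd_add_right h3).mp h5

lemma coll_unique_aux (m n i j i' j' : ℕ) (hm : 0 < m) (hn : 0 < n)
    (hi : i < m) (hj : j < n) (hi' : i' < m) (hj' : j' < n) (hle : i ≤ i')
    (h1 : 2*i*(n*n) + (n*n + n) = m*(m-1)*n + 2*(m*(j+1)))
    (h2 : 2*i'*(n*n) + (n*n + n) = m*(m-1)*n + 2*(m*(j'+1))) :
    i = i' ∧ j = j' := by
  obtain ⟨c, rfl⟩ := Nat.exists_eq_add_of_le hle
  have key : 2*c*(n*n) + 2*m*(j+1) = 2*m*(j'+1) := by nlinarith [h1, h2]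
  have hjj : j + 1 ≤ j' + 1 := by
    refine Nat.le_of_mul_le_mul_left ?_ (show 0 < 2*m by omega)
    calc 2*m*(j+1) ≤ 2*c*(n*n) + 2*m*(j+1) := by omega
    _ = 2*m*(j'+1) := key
  obtain ⟨e, rfl⟩ : ∃ e, j' = j + e := ⟨j' - j, by omega⟩
  have keq : c*(n*n) = m*e := by nlinarith [key]
  rcases Nat.eq_zero_or_pos c with hc0 | hcpos
  · subst hc0
    have hme : m*e = 0 := by simpa using keq.symm
    have he : e = 0 := by
      rcases Nat.mul_eq_zero.mp hme with h | h
      · omega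
      · exact h
    omega
  · exfalso
    set d := Nat.gcd (n*n) m with hdd
    have hdn : d ∣ n := coll_dvd m n i j h1
    have hd1 : d ∣ n*n := Nat.gcd_dvd_left _ _
    have hd2 : d ∣ m := Nat.gcd_dvd_right _ _
    have hdpos : 0 < d := Nat.gcd_pos_of_pos_right _ hm
    set a := n*n/d with haa
    set b := m/d with hbb
    have ha : a * d = n*n := Nat.div_mul_cancel hd1
    have hb : b * d = m := Nat.div_mul_cancel hd2
    have hca : c * a = b * e := by
      have h6 : (c*a)*d = (b*e)*d := by
        calc (c*a)*d = c*(a*d) := by ring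
        _ = c*(n*n) := by rw [ha]
        _ = m*e := keq
        _ = (b*d)*e := by rw [hb]
        _ = (b*e)*d := by ring
      exact Nat.eq_of_mul_eq_mul_right hdpos h6
    have cop : Nat.Coprime a b := Nat.coprime_div_gcd_div_gcd hdpos
    have hbc : b ∣ c := by
      have : b ∣ c * a := Dvd.intro e hca.symm
      exact (Nat.Coprime.dvd_of_dvd_mul_right (cop.symm) this)
    have hbpos : 0 < b := Nat.div_pos (Nat.le_of_dvd hm hd2) hdpos
    have hcb : b ≤ c := Nat.le_of_dvd hcpos hbc
    have hdlen : d ≤ n := Nat.le_of_dvd hn hdn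
    have han : n ≤ a := by
      by_contra hcon
      push_neg at hcon
      have h7 : a * d ≤ a * n := Nat.mul_le_mul_left a hdlen
      have h8 : a * n < n * n := mul_lt_mul_of_pos_right hcon hn
      linarith [ha, h7, h8]
    have hea : a ≤ e := by
      refine Nat.le_of_mul_le_mul_left ?_ hbpos
      calc b * a ≤ c * a := Nat.mul_le_mul_right a hcb
      _ = b * e := hca
    have : e < n := by omega
    omega

lemma coll_unique (m n i j i' j' : ℕ) (hm : 0 < m) (hn : 0 < n)
    (hi : i < m) (hj : j < n) (hi' : i' < m) (hj' : j' < n)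
    (h1 : 2*i*(n*n) + (n*n + n) = m*(m-1)*n + 2*(m*(j+1)))
    (h2 : 2*i'*(n*n) + (n*n + n) = m*(m-1)*n + 2*(m*(j'+1))) :
    i = i' ∧ j = j' := by
  rcases Nat.le_total i i' with hle | hle
  · exact coll_unique_aux m n i j i' j' hm hn hi hj hi' hj' hle h1 h2
  · obtain ⟨h1', h2'⟩ := coll_unique_aux m n i' j' i j hm hn hi' hj' hi hj hle h2 h1
    exact ⟨h1'.symm, h2'.symm⟩

lemma coll_window (m n i j : ℕ) (hm : 3 ≤ m) (hn : 2 ≤ n) (hi : i < m) (hj : j < n)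
    (h1 : 2*i*(n*n) + (n*n + n) = m*(m-1)*n + 2*(m*(j+1))) (hM : n*n ≤ m - 1) : False := by
  obtain ⟨M, rfl⟩ : ∃ M, m = M + 1 := ⟨m - 1, by omega⟩
  simp only [Nat.add_sub_cancel] at h1 hM
  have hiM : i ≤ M := by omega
  have g1 : 2*i*(n*n) ≤ 2*M*(n*n) := by
    have := Nat.mul_le_mul_right (n*n) (show 2*i ≤ 2*M by omega)
    linarith
  have g2 : 2*(M+1) ≤ 2*(M+1)*(j+1) := Nat.le_mul_of_pos_right _ (by omega)
  have win : (M+1)*M*n + 2*(M+1) ≤ 2*M*(n*n) + n*n + n := by linarith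
  have f1 : M*(n*n)*n ≤ M*M*n := Nat.mul_le_mul_right n (Nat.mul_le_mul_left M hM)
  have f2 : 2*(M*(n*n)) ≤ M*(n*n)*n := by
    calc 2*(M*(n*n)) = (M*(n*n))*2 := by ring
    _ ≤ (M*(n*n))*n := Nat.mul_le_mul_left _ hn
    _ = M*(n*n)*n := by ring
  have f3 : (n*n)*n ≤ M*n := Nat.mul_le_mul_right n hM
  have f4 : n*n + n ≤ (n*n)*n := by
    have h5 : n ≤ n*n := Nat.le_mul_of_pos_left n (by omega)
    calc n*n + n ≤ n*n + n*n := by omega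
    _ = (n*n)*2 := by ring
    _ ≤ (n*n)*n := Nat.mul_le_mul_left _ hn
  have hexp : (M+1)*M*n = M*M*n + M*n := by ring
  linarith

private def f24 : Fin 2 × Fin 4 → ℕ := fun p =>
  if p.1.val = 0 then
    (if p.2.val = 0 then 1 else if p.2.val = 1 then 2 else if p.2.val = 2 then 3 else 8)
  else
    (if p.2.val = 0 then 4 else if p.2.val = 1 then 5 else if p.2.val = 2 then 6 else 7)

lemma case24 :
    ∃ f : Fin 2 × Fin 4 → ℕ,
      Set.BijOn f Set.univ ↑(Finset.Icc 1 (2 * 4)) ∧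
      Function.Injective (fun i : Fin 2 => ∑ j, f (i, j)) ∧
      Function.Injective (fun j : Fin 4 => ∑ i, f (i, j)) ∧
      ∀ (i : Fin 2) (j : Fin 4), (∑ j', f (i, j')) ≠ ∑ i', f (i', j) := by
  refine ⟨f24, ⟨?_, ?_, ?_⟩, ?_, ?_, ?_⟩
  · intro p _
    simp only [Finset.coe_Icc, Set.mem_Icc]
    revert p; decide
  · intro p _ q _ h
    revert h; revert p q; decide
  · intro x hx
    simp only [Finset.coe_Icc, Set.mem_Icc] at hx
    obtain ⟨hx1, hx2⟩ := hx
    simp only [Set.image_univ, Set.mem_range]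
    interval_cases x
    · exact ⟨(0, 0), by decide⟩
    · exact ⟨(0, 1), by decide⟩
    · exact ⟨(0, 2), by decide⟩
    · exact ⟨(1, 0), by decide⟩
    · exact ⟨(1, 1), by decide⟩
    · exact ⟨(1, 2), by decide⟩
    · exact ⟨(1, 3), by decide⟩
    · exact ⟨(0, 3), by decide⟩
  · decide
  · decide
  · decide

private def f25 : Fin 2 × Fin 5 → ℕ := fun p =>
  if p.1.val = 0 then (if p.2.val = 4 then 10 else p.2.val + 1)
  else p.2.val + 5

lemma case25 :
    ∃ f : Fin 2 × Fin 5 → ℕ,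
      Set.BijOn f Set.univ ↑(Finset.Icc 1 (2 * 5)) ∧
      Function.Injective (fun i : Fin 2 => ∑ j, f (i, j)) ∧
      Function.Injective (fun j : Fin 5 => ∑ i, f (i, j)) ∧
      ∀ (i : Fin 2) (j : Fin 5), (∑ j', f (i, j')) ≠ ∑ i', f (i', j) := by
  refine ⟨f25, ⟨?_, ?_, ?_⟩, ?_, ?_, ?_⟩
  · intro p _
    simp only [Finset.coe_Icc, Set.mem_Icc]
    revert p; decide
  · intro p _ q _ h
    revert h; revert p q; decide
  · intro x hx
    simp only [Finset.coe_Icc, Set.mem_Icc] at hx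
    obtain ⟨hx1, hx2⟩ := hx
    simp only [Set.image_univ, Set.mem_range]
    interval_cases x
    · exact ⟨(0, 0), by decide⟩
    · exact ⟨(0, 1), by decide⟩
    · exact ⟨(0, 2), by decide⟩
    · exact ⟨(0, 3), by decide⟩
    · exact ⟨(1, 0), by decide⟩
    · exact ⟨(1, 1), by decide⟩
    · exact ⟨(1, 2), by decide⟩
    · exact ⟨(1, 3), by decide⟩
    · exact ⟨(1, 4), by decide⟩
    · exact ⟨(0, 4), by decide⟩
  · decide
  · decide
  · decide

lemma shift_impossible (n x y : ℕ) (hn2 : 2 ≤ n) (hkey : x*(n*n) = y*(n*n) + 1) : False := by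
  have h4 : 4 ≤ n*n := Nat.mul_le_mul hn2 hn2
  rcases Nat.lt_or_ge y x with hlt | hge
  · have : (y+1)*(n*n) ≤ x*(n*n) := Nat.mul_le_mul_right _ (by omega)
    nlinarith
  · have : x*(n*n) ≤ y*(n*n) := Nat.mul_le_mul_right _ hge
    omega

lemma key_window (m n x y : ℕ) (hm3 : 3 ≤ m) (hn2 : 2 ≤ n)
    (hkey : x*(n*n) + 1 = y*(n*n) + m) : n*n ≤ m - 1 := by
  rcases le_or_gt x y with hge | hlt
  · exfalso
    have : x*(n*n) ≤ y*(n*n) := Nat.mul_le_mul_right _ hge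
    omega
  · obtain ⟨c, rfl⟩ : ∃ c, x = y + (c+1) := ⟨x - y - 1, by omega⟩
    have hexp : (y+(c+1))*(n*n) = y*(n*n) + c*(n*n) + n*n := by ring
    have h4 : 4 ≤ n*n := Nat.mul_le_mul hn2 hn2
    omega

theorem stmt2 (m n : ℕ) (hm : 0 < m) (hn : 0 < n) (h : ¬(m = 1 ∧ n = 1)) :
    ∃ f : Fin m × Fin n → ℕ,
      Set.BijOn f Set.univ ↑(Finset.Icc 1 (m * n)) ∧
      Function.Injective (fun i : Fin m => ∑ j, f (i, j)) ∧
      Function.Injective (fun j : Fin n => ∑ i, f (i, j)) ∧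
      ∀ (i : Fin m) (j : Fin n), (∑ j', f (i, j')) ≠ ∑ i', f (i', j) := by
  classical
  by_cases hex : ∃ (i : Fin m) (j : Fin n),
      (i : ℕ) * (n * n) + Bsum n = Asum m * n + m * ((j : ℕ) + 1)
  case neg =>
    -- no collision: plain row-major works
    refine ⟨fun p => (p.1 : ℕ) * n + (p.2 : ℕ) + 1, rm_bijOn m n hn, ?_, ?_, ?_⟩
    · intro a b hab
      have hab' : (∑ j : Fin n, ((a : ℕ) * n + (j : ℕ) + 1))
          = ∑ j : Fin n, ((b : ℕ) * n + (j : ℕ) + 1) := hab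
      rw [sum_row m n a, sum_row m n b] at hab'
      have : (a : ℕ) * (n * n) = (b : ℕ) * (n * n) := by omega
      exact Fin.ext (Nat.eq_of_mul_eq_mul_right (by positivity) this)
    · intro a b hab
      have hab' : (∑ i : Fin m, ((i : ℕ) * n + (a : ℕ) + 1))
          = ∑ i : Fin m, ((i : ℕ) * n + (b : ℕ) + 1) := hab
      rw [sum_col m n a, sum_col m n b] at hab'
      have : m * ((a : ℕ) + 1) = m * ((b : ℕ) + 1) := by omega
      have := Nat.eq_of_mul_eq_mul_left hm this
      exact Fin.ext (by omega)
    · intro i j hcon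
      have hcon' : (i : ℕ) * (n * n) + Bsum n = Asum m * n + m * ((j : ℕ) + 1) := by
        rw [← sum_row m n i, ← sum_col m n j]; exact hcon
      exact hex ⟨i, j, hcon'⟩
  case pos =>
    obtain ⟨i₀, j₀, hc⟩ := hex
    have hc2 : 2*(i₀:ℕ)*(n*n) + (n*n + n) = m*(m-1)*n + 2*(m*((j₀:ℕ)+1)) := by
      have := doubled m n (i₀ : ℕ) 0 (m*((j₀:ℕ)+1)) (by omega)
      omega
    have hi₀ := i₀.2
    have hj₀ := j₀.2
    -- rule out n = 1
    have hn2 : 2 ≤ n := by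
      rcases Nat.lt_or_ge n 2 with h1 | h1
      · exfalso
        have hn1 : n = 1 := by omega
        subst hn1
        have hj0 : (j₀ : ℕ) = 0 := by omega
        rw [hj0] at hc2
        simp only [Nat.mul_one] at hc2
        -- 2*i₀ + 2 = m*(m-1) + 2*m
        rcases Nat.lt_or_ge m 2 with h2 | h2
        · exact h ⟨by omega, rfl⟩
        · obtain ⟨M, rfl⟩ : ∃ M, m = M + 2 := ⟨m - 2, by omega⟩
          rw [show M + 2 - 1 = M + 1 from rfl] at hc2
          nlinarith [hc2, hi₀]
      · exact h1
    -- rule out m = 1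
    have hm1 : m ≠ 1 := by
      intro hm1
      subst hm1
      have hi0 : (i₀ : ℕ) = 0 := by omega
      rw [hi0] at hc2
      norm_num at hc2
      -- n*n + n = 2*(j₀+1)
      nlinarith [hc2, hj₀, hn2]
    -- handle m = 2
    rcases Nat.lt_or_ge m 3 with hm2 | hm3
    · have hm2' : m = 2 := by omega
      subst hm2'
      -- hc2 : 2*i₀*(n*n) + (n*n + n) = 2*n + 2*(2*(j₀+1))
      have hi01 : (i₀ : ℕ) = 0 ∨ (i₀ : ℕ) = 1 := by omega
      have hi0 : (i₀ : ℕ) = 0 := by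
        rcases hi01 with h1 | h1
        · exact h1
        · exfalso; rw [h1] at hc2; nlinarith [hc2, hj₀, hn2]
      rw [hi0] at hc2
      have hn5 : n ≤ 5 := by nlinarith [hc2, hj₀, hn2]
      interval_cases n
      · exfalso; omega
      · exfalso; omega
      · exact case24
      · exact case25
    -- main case : m ≥ 3, n ≥ 2
    set pv : ℕ := if (j₀ : ℕ) + 1 < n then (j₀ : ℕ) else (j₀ : ℕ) - 1 with hpvdef
    have hpv1 : pv + 1 < n := by
      rw [hpvdef]; split_ifs with h1 <;> omega
    have hj₀pv : (j₀ : ℕ) = pv ∨ (j₀ : ℕ) = pv + 1 := by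
      rw [hpvdef]; split_ifs with h1 <;> omega
    set jp : Fin n := ⟨pv, by omega⟩ with hjp
    set jq : Fin n := ⟨pv + 1, hpv1⟩ with hjq
    have hjpq : jp ≠ jq := by
      intro hcon; rw [Fin.ext_iff] at hcon; simp [hjp, hjq] at hcon
    set e : (Fin m × Fin n) ≃ (Fin m × Fin n) := Equiv.swap (i₀, jp) (i₀, jq) with he
    have fact1 : ∀ (i : Fin m) (j : Fin n), i ≠ i₀ → e (i, j) = (i, j) := by
      intro i j hne
      apply Equiv.swap_apply_of_ne_of_ne
      · intro hcon; exact hne (congrArg Prod.fst hcon)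
      · intro hcon; exact hne (congrArg Prod.fst hcon)
    have fact2 : ∀ j : Fin n, e (i₀, j) = (i₀, Equiv.swap jp jq j) := by
      intro j
      rcases eq_or_ne j jp with rfl | hne1
      · rw [he, Equiv.swap_apply_left, Equiv.swap_apply_left]
      rcases eq_or_ne j jq with rfl | hne2
      · rw [he, Equiv.swap_apply_right, Equiv.swap_apply_right]
      · rw [Equiv.swap_apply_of_ne_of_ne (fun hcon => hne1 (congrArg Prod.snd hcon))
          (fun hcon => hne2 (congrArg Prod.snd hcon)),
          Equiv.swap_apply_of_ne_of_ne hne1 hne2]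
    have fact3 : ∀ (i : Fin m) (j : Fin n), (j : ℕ) ≠ pv → (j : ℕ) ≠ pv + 1 →
        e (i, j) = (i, j) := by
      intro i j h1 h2
      apply Equiv.swap_apply_of_ne_of_ne
      · intro hcon
        have := congrArg Prod.snd hcon
        simp only at this
        rw [this] at h1; exact h1 rfl
      · intro hcon
        have := congrArg Prod.snd hcon
        simp only at this
        rw [this] at h2; exact h2 rfl
    have Srowf : ∀ i : Fin m,
        (∑ j : Fin n, (((e (i, j)).1 : ℕ) * n + ((e (i, j)).2 : ℕ) + 1))
          = (i : ℕ) * (n * n) + Bsum n := by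
      intro i
      rcases eq_or_ne i i₀ with rfl | hne
      · have hterm : ∀ j : Fin n, (((e (i, j)).1 : ℕ) * n + ((e (i, j)).2 : ℕ) + 1)
            = ((i : ℕ) * n + ((Equiv.swap jp jq j : Fin n) : ℕ) + 1) := by
          intro j; rw [fact2 j]
        rw [Finset.sum_congr rfl (fun j _ => hterm j),
          Equiv.sum_comp (Equiv.swap jp jq) (fun j : Fin n => (i : ℕ) * n + (j : ℕ) + 1)]
        exact sum_row m n i
      · have hterm : ∀ j : Fin n, (((e (i, j)).1 : ℕ) * n + ((e (i, j)).2 : ℕ) + 1)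
            = ((i : ℕ) * n + (j : ℕ) + 1) := by
          intro j; rw [fact1 i j hne]
        rw [Finset.sum_congr rfl (fun j _ => hterm j)]
        exact sum_row m n i
    have Scolother : ∀ j : Fin n, (j : ℕ) ≠ pv → (j : ℕ) ≠ pv + 1 →
        (∑ i : Fin m, (((e (i, j)).1 : ℕ) * n + ((e (i, j)).2 : ℕ) + 1))
          = Asum m * n + m * ((j : ℕ) + 1) := by
      intro j h1 h2
      have hterm : ∀ i : Fin m, (((e (i, j)).1 : ℕ) * n + ((e (i, j)).2 : ℕ) + 1)
          = ((i : ℕ) * n + (j : ℕ) + 1) := by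
        intro i; rw [fact3 i j h1 h2]
      rw [Finset.sum_congr rfl (fun i _ => hterm i)]
      exact sum_col m n j
    have hswapp : Equiv.swap jp jq jp = jq := Equiv.swap_apply_left _ _
    have hswapq : Equiv.swap jp jq jq = jp := Equiv.swap_apply_right _ _
    have Scolp : (∑ i : Fin m, (((e (i, jp)).1 : ℕ) * n + ((e (i, jp)).2 : ℕ) + 1))
        = Asum m * n + m * (pv + 1) + 1 := by
      have hterm : ∀ i : Fin m, (((e (i, jp)).1 : ℕ) * n + ((e (i, jp)).2 : ℕ) + 1)
          = ((i : ℕ) * n + (jp : ℕ) + 1) + (if i = i₀ then 1 else 0) := by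
        intro i
        rcases eq_or_ne i i₀ with rfl | hne
        · rw [fact2 jp, hswapp, if_pos rfl]
          show (i : ℕ) * n + (pv + 1) + 1 = (i : ℕ) * n + pv + 1 + 1
          omega
        · rw [fact1 i jp hne, if_neg hne]
      rw [Finset.sum_congr rfl (fun i _ => hterm i), Finset.sum_add_distrib,
        sum_col m n jp, Finset.sum_ite_eq' Finset.univ i₀ (fun _ => 1)]
      simp [hjp]
    have Scolq : (∑ i : Fin m, (((e (i, jq)).1 : ℕ) * n + ((e (i, jq)).2 : ℕ) + 1)) + 1
        = Asum m * n + m * (pv + 2) := by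
      have hterm : ∀ i : Fin m, ((i : ℕ) * n + (jq : ℕ) + 1)
          = (((e (i, jq)).1 : ℕ) * n + ((e (i, jq)).2 : ℕ) + 1) + (if i = i₀ then 1 else 0) := by
        intro i
        rcases eq_or_ne i i₀ with rfl | hne
        · rw [fact2 jq, hswapq, if_pos rfl]
          show (i : ℕ) * n + (pv + 1) + 1 = (i : ℕ) * n + pv + 1 + 1
          omega
        · rw [fact1 i jq hne, if_neg hne]
      have := sum_col m n jq
      rw [Finset.sum_congr rfl (fun i _ => hterm i), Finset.sum_add_distrib,
        Finset.sum_ite_eq' Finset.univ i₀ (fun _ => 1)] at this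
      simp only [Finset.mem_univ, if_true] at this
      rw [show pv + 1 + 1 = pv + 2 from rfl] at this
      exact this
    refine ⟨fun q => ((e q).1 : ℕ) * n + ((e q).2 : ℕ) + 1, ?_, ?_, ?_, ?_⟩
    · show Set.BijOn ((fun p : Fin m × Fin n => (p.1 : ℕ) * n + (p.2 : ℕ) + 1) ∘ e)
          Set.univ ↑(Finset.Icc 1 (m * n))
      exact Set.BijOn.comp (rm_bijOn m n hn) e.bijective.bijOn_univ
    · intro a b hab
      have hab' : (∑ j : Fin n, (((e (a, j)).1 : ℕ) * n + ((e (a, j)).2 : ℕ) + 1))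
          = ∑ j : Fin n, (((e (b, j)).1 : ℕ) * n + ((e (b, j)).2 : ℕ) + 1) := hab
      rw [Srowf a, Srowf b] at hab'
      have hcancel : (a : ℕ) * (n * n) = (b : ℕ) * (n * n) := by omega
      exact Fin.ext (Nat.eq_of_mul_eq_mul_right (by positivity) hcancel)
    · intro a b hab
      have hab' : (∑ i : Fin m, (((e (i, a)).1 : ℕ) * n + ((e (i, a)).2 : ℕ) + 1))
          = ∑ i : Fin m, (((e (i, b)).1 : ℕ) * n + ((e (i, b)).2 : ℕ) + 1) := hab
      have hr : m * (pv + 2) = m * (pv + 1) + m := by ring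
      rcases eq_or_ne (a : ℕ) pv with hap | hap
      · have haj : a = jp := Fin.ext hap
        rw [haj, Scolp] at hab'
        rcases eq_or_ne (b : ℕ) pv with hbp | hbp
        · exact Fin.ext (by omega)
        rcases eq_or_ne (b : ℕ) (pv + 1) with hbq | hbq
        · exfalso
          have hbj : b = jq := Fin.ext hbq
          rw [hbj] at hab'
          omega
        · exfalso
          rw [Scolother b hbp hbq] at hab'
          have : m * ((b : ℕ) + 1) = m * (pv + 1) + 1 := by omega
          exact absurd this (mul_ne_mul_add_one (by omega) _ _)
      rcases eq_or_ne (a : ℕ) (pv + 1) with haq | haq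
      · have haj : a = jq := Fin.ext haq
        rw [haj] at hab'
        rcases eq_or_ne (b : ℕ) pv with hbp | hbp
        · exfalso
          have hbj : b = jp := Fin.ext hbp
          rw [hbj, Scolp] at hab'
          omega
        rcases eq_or_ne (b : ℕ) (pv + 1) with hbq | hbq
        · exact Fin.ext (by omega)
        · exfalso
          rw [Scolother b hbp hbq] at hab'
          have : m * ((b : ℕ) + 1) + 1 = m * (pv + 2) := by omega
          exact absurd this.symm (by
            have := mul_ne_mul_add_one (show 2 ≤ m by omega) (pv + 2) ((b : ℕ) + 1)
            exact this)
      · rw [Scolother a hap haq] at hab'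
        rcases eq_or_ne (b : ℕ) pv with hbp | hbp
        · exfalso
          have hbj : b = jp := Fin.ext hbp
          rw [hbj, Scolp] at hab'
          have : m * ((a : ℕ) + 1) = m * (pv + 1) + 1 := by omega
          exact absurd this (mul_ne_mul_add_one (by omega) _ _)
        rcases eq_or_ne (b : ℕ) (pv + 1) with hbq | hbq
        · exfalso
          have hbj : b = jq := Fin.ext hbq
          rw [hbj] at hab'
          have : m * ((a : ℕ) + 1) + 1 = m * (pv + 2) := by omega
          exact absurd this.symm (by
            have := mul_ne_mul_add_one (show 2 ≤ m by omega) (pv + 2) ((a : ℕ) + 1)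
            exact this)
        · rw [Scolother b hbp hbq] at hab'
          have : m * ((a : ℕ) + 1) = m * ((b : ℕ) + 1) := by omega
          have := Nat.eq_of_mul_eq_mul_left hm this
          exact Fin.ext (by omega)
    · intro i j hcon
      have hcon' : (i : ℕ) * (n * n) + Bsum n
          = ∑ i' : Fin m, (((e (i', j)).1 : ℕ) * n + ((e (i', j)).2 : ℕ) + 1) := by
        rw [← Srowf i]; exact hcon
      have hi := i.2
      have hj := j.2
      rcases eq_or_ne (j : ℕ) pv with hjpv | hjpv
      · -- modified column p : sum = Asum*n + m*(pv+1) + 1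
        have hjj : j = jp := Fin.ext hjpv
        rw [hjj, Scolp] at hcon'
        have hd : 2*(i:ℕ)*(n*n) + (n*n + n) = m*(m-1)*n + 2*(m*(pv+1)) + 2 := by
          have := doubled m n (i : ℕ) 0 (m*(pv+1) + 1) (by omega)
          omega
        rcases hj₀pv with hjo | hjo
        · -- j₀ = pv : difference 2
          rw [hjo] at hc2
          have hkey : (i : ℕ)*(n*n) = (i₀ : ℕ)*(n*n) + 1 := by linarith
          exact shift_impossible n _ _ hn2 hkey
        · -- j₀ = pv + 1 : difference gives n*n ≤ m-1, window contradiction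
          rw [hjo] at hc2
          have hr2 : m * (pv + 1 + 1) = m * (pv + 1) + m := by ring
          have hkey : (i₀ : ℕ)*(n*n) + 1 = (i : ℕ)*(n*n) + m := by linarith
          have hM := key_window m n _ _ hm3 hn2 hkey
          exact coll_window m n (i₀ : ℕ) (j₀ : ℕ) hm3 hn2 hi₀ hj₀ (by rw [hjo]; exact hc2) hM
      rcases eq_or_ne (j : ℕ) (pv + 1) with hjpv1 | hjpv1
      · -- modified column q
        have hjj : j = jq := Fin.ext hjpv1
        rw [hjj] at hcon'
        have hq : (i : ℕ)*(n*n) + Bsum n + 1 = Asum m * n + m*(pv+2) := by omega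
        have hd : 2*(i:ℕ)*(n*n) + (n*n + n) + 2 = m*(m-1)*n + 2*(m*(pv+2)) :=
          doubled m n (i : ℕ) 1 (m*(pv+2)) hq
        rcases hj₀pv with hjo | hjo
        · -- j₀ = pv : window
          rw [hjo] at hc2
          have hr2 : m * (pv + 2) = m * (pv + 1) + m := by ring
          have hkey : (i : ℕ)*(n*n) + 1 = (i₀ : ℕ)*(n*n) + m := by linarith
          have hM := key_window m n _ _ hm3 hn2 hkey
          exact coll_window m n (i₀ : ℕ) (j₀ : ℕ) hm3 hn2 hi₀ hj₀ (by rw [hjo]; exact hc2) hM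
        · -- j₀ = pv + 1 : difference 2
          rw [hjo] at hc2
          have hr2 : m * (pv + 1 + 1) = m * (pv + 2) := by ring
          have hkey : (i₀ : ℕ)*(n*n) = (i : ℕ)*(n*n) + 1 := by linarith
          exact shift_impossible n _ _ hn2 hkey
      · -- untouched column : collision uniqueness
        rw [Scolother j hjpv hjpv1] at hcon'
        have hd : 2*(i:ℕ)*(n*n) + (n*n + n) = m*(m-1)*n + 2*(m*((j:ℕ)+1)) := by
          have := doubled m n (i : ℕ) 0 (m*((j:ℕ)+1)) (by omega)
          omega
        obtain ⟨-, hjeq⟩ := coll_unique m n (i : ℕ) (j : ℕ) (i₀ : ℕ) (j₀ : ℕ)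
          hm hn hi hj hi₀ hj₀ hd hc2
        rcases hj₀pv with hjo | hjo
        · exact hjpv (hjeq.trans hjo)
        · exact hjpv1 (hjeq.trans hjo)
end

section
/- The complete bipartite graph K_{m,n} is antimagic for all m, n ≥ 1 with m + n ≥ 3. -/
open Classical in
/-- A graph is antimagic if there is a bijection from its edge set to `{1,...,m}`
(`m` the number of edges) such that all vertex sums are pairwise distinct. -/
def SimpleGraph.IsAntimagic {V : Type*} [Fintype V] (G : SimpleGraph V) : Prop :=
  ∃ f : Sym2 V → ℕ,
    Set.BijOn f ↑G.edgeFinset ↑(Finset.Icc 1 G.edgeFinset.card) ∧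
    Function.Injective (fun v : V => ∑ e ∈ G.incidenceFinset v, f e)

/-!
Read a labelling of `K_{m,n}` as an `m × n` array of the numbers `1, …, mn`, so that vertex sums
become row and column sums, and let `m ≤ n`. If row `i` holds the block `n i + 1, …, n i + n`,
consecutive row sums differ by `n²` while all column sums lie in a window of width `< n²`: at most
one value is forbidden to the column sums. With increasing rows the column sums form a progression
of step `m`; if the forbidden value is one of its terms, swapping two adjacent entries of the first
row moves two column sums by `±1`, which for `m ≥ 3` keeps them distinct and avoids it. For
`m = 1` the row sum exceeds every column sum, and for `m = 2` the transposed array (rows `1, 2`,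
`3, 4`, …) has row sums `≡ 3` and column sums `n²`, `n² + n` `≢ 3 (mod 4)`.
-/

open Finset Function Equiv SimpleGraph

theorem Equiv.bijOn_val_add_one {γ : Type*} {N : ℕ} (e : γ ≃ Fin N) :
    Set.BijOn (fun x => (e x : ℕ) + 1) .univ (.Icc 1 N) := by
  refine ⟨fun x _ => ⟨le_add_self, (e x).isLt⟩,
    fun x _ y _ h => e.injective (Fin.ext (by simpa using h)), ?_⟩
  rintro k ⟨hk1, hkN⟩
  exact ⟨e.symm ⟨k - 1, by omega⟩, trivial, by simp; omega⟩

theorem Int.eq_and_eq_of_mul_add_eq_mul_add {m x y d e : ℤ} (h : m * x + d = m * y + e)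
    (hde : |e - d| < m) : x = y ∧ d = e := by
  have hm : m ≠ 0 := by rintro rfl; exact (abs_nonneg _).not_gt hde
  have hed : e - d = 0 := Int.eq_zero_of_abs_lt_dvd ⟨x - y, by linarith⟩ hde
  exact ⟨mul_left_cancel₀ hm (by linarith), by linarith⟩

theorem Finset.two_mul_sum_range_add_one (n : ℕ) : 2 * ∑ j ∈ range n, (j + 1) = n * (n + 1) := by
  induction n with
  | zero => rfl
  | succ k ih => rw [sum_range_succ, mul_add, ih]; ring

theorem Finset.sum_range_two_mul_add_one (n : ℕ) : ∑ i ∈ range n, (2 * i + 1) = n * n := by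
  induction n with
  | zero => rfl
  | succ k ih => rw [sum_range_succ, ih]; ring

section CompleteBipartite

variable {α β : Type*}

theorem incidenceFinset_completeBipartiteGraph_inl [Fintype β] [DecidableEq (α ⊕ β)] (a : α)
    [Fintype ((completeBipartiteGraph α β).neighborSet (.inl a))] :
    (completeBipartiteGraph α β).incidenceFinset (.inl a) =
      univ.image fun b => s(.inl a, .inr b) := by
  ext x
  induction x using Sym2.ind with
  | h v w => cases v <;> cases w <;> simp [incidenceSet]

theorem incidenceFinset_completeBipartiteGraph_inr [Fintype α] [DecidableEq (α ⊕ β)] (b : β)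
    [Fintype ((completeBipartiteGraph α β).neighborSet (.inr b))] :
    (completeBipartiteGraph α β).incidenceFinset (.inr b) =
      univ.image fun a => s(.inl a, .inr b) := by
  ext x
  induction x using Sym2.ind with
  | h v w => cases v <;> cases w <;> simp [incidenceSet, or_comm]

variable [Fintype α] [Fintype β]

def lineSums (f : α × β → ℕ) : α ⊕ β → ℕ :=
  Sum.elim (fun a => ∑ b, f (a, b)) (fun b => ∑ a, f (a, b))

theorem lineSums_comp_swap (f : α × β → ℕ) :
    lineSums (f ∘ Prod.swap) = lineSums f ∘ Sum.swap := by
  ext (a | b) <;> rfl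

/-- Cell `(a, b)` of the array is the label of the edge `a b` of `K_{α,β}`. -/
def HasAntimagicArray (α β : Type*) [Fintype α] [Fintype β] : Prop :=
  ∃ (N : ℕ) (e : α × β ≃ Fin N), Injective (lineSums fun p => (e p : ℕ) + 1)

theorem HasAntimagicArray.swap (h : HasAntimagicArray α β) : HasAntimagicArray β α := by
  obtain ⟨N, e, he⟩ := h
  refine ⟨N, (Equiv.prodComm β α).trans e, ?_⟩
  have := he.comp Sum.swap_leftInverse.injective
  rwa [← lineSums_comp_swap] at this

theorem HasAntimagicArray.isAntimagic (h : HasAntimagicArray α β) :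
    (completeBipartiteGraph α β).IsAntimagic := by
  classical
  obtain ⟨N, e, he⟩ := h
  set G := completeBipartiteGraph α β
  set φ : α × β → Sym2 (α ⊕ β) := fun p => s(.inl p.1, .inr p.2)
  have hφ : Injective φ := by
    rintro ⟨a, b⟩ ⟨a', b'⟩ h
    simpa [φ] using h
  have hE : G.edgeFinset = univ.image φ := by
    ext x
    simp [G, edgeSet_completeBipartiteGraph, φ]
  set F := extend φ (fun p => (e p : ℕ) + 1) 0
  have hF (p : α × β) : F (φ p) = e p + 1 := hφ.extend_apply _ _ p
  refine ⟨F, ?_, ?_⟩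
  · rw [hE, card_image_of_injective _ hφ, card_univ, Fintype.card_congr e, Fintype.card_fin,
      coe_image, coe_univ, coe_Icc, ← Set.bijOn_comp_iff hφ.injOn]
    convert e.bijOn_val_add_one using 1
    exact funext hF
  · convert he using 1
    ext (a | b)
    · simp only [lineSums, Sum.elim_inl, ← hF]
      rw [← sum_image (f := F) (s := univ) (g := fun b => φ (a, b))
        (hφ.comp (Prod.mk_right_injective a)).injOn]
      congr 1
      convert incidenceFinset_completeBipartiteGraph_inl a
    · simp only [lineSums, Sum.elim_inr, ← hF]
      rw [← sum_image (f := F) (s := univ) (g := fun a => φ (a, b))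
        (hφ.comp (Prod.mk_left_injective b)).injOn]
      congr 1
      convert incidenceFinset_completeBipartiteGraph_inr b

end CompleteBipartite

section RowBlocks

variable {m n : ℕ}

def permColSum (π : Fin m → Perm (Fin n)) (j : Fin n) : ℕ := ∑ i, (π i j : ℕ)

theorem permColSum_one (j : Fin n) : permColSum (1 : Fin m → Perm (Fin n)) j = m * j := by
  simp [permColSum]

theorem permColSum_mulSingle (i₀ : Fin m) (σ : Perm (Fin n)) (j : Fin n) :
    (permColSum (Pi.mulSingle i₀ σ) j : ℤ) = m * j + (((σ j : ℕ) : ℤ) - j) := by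
  classical
  have h := Fintype.sum_eq_add_sum_compl i₀
    fun i => ((Pi.mulSingle i₀ σ : Fin m → Perm (Fin n)) i j : ℕ)
  have h1 := Fintype.sum_eq_add_sum_compl i₀ fun _ : Fin m => (j : ℕ)
  simp only [sum_const, card_univ, Fintype.card_fin, smul_eq_mul] at h1
  rw [permColSum, h, Pi.mulSingle_eq_same,
    sum_congr rfl fun i hi => by rw [Pi.mulSingle_eq_of_ne (by simpa using hi)]]
  simp only [Perm.one_apply, sum_const, smul_eq_mul]
  have h1' := congrArg (Nat.cast : ℕ → ℤ) h1
  push_cast at h1' ⊢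
  linear_combination -h1'

theorem abs_swap_apply_sub_le_one {a b : Fin n} (hab : (b : ℕ) = a + 1) (j : Fin n) :
    |((swap a b j : ℕ) : ℤ) - j| ≤ 1 := by
  rw [swap_apply_def]
  split_ifs <;> simp only [abs_le] <;> subst_vars <;> omega

theorem injective_permColSum_mulSingle_swap (hm : 3 ≤ m) (i₀ : Fin m) {a b : Fin n}
    (hab : (b : ℕ) = a + 1) : Injective (permColSum (Pi.mulSingle i₀ (swap a b))) := by
  intro j j' h
  have := Int.eq_and_eq_of_mul_add_eq_mul_add (m := m) (x := j) (y := j')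
    (by rw [← permColSum_mulSingle, ← permColSum_mulSingle, h])
    (by have := abs_le.1 (abs_swap_apply_sub_le_one hab j)
        have := abs_le.1 (abs_swap_apply_sub_le_one hab j'); rw [abs_lt]; omega)
  exact Fin.ext (by exact_mod_cast this.1)

theorem permColSum_mulSingle_swap_ne (hm : 2 ≤ m) (i₀ : Fin m) {a b j₀ : Fin n}
    (hab : (b : ℕ) = a + 1) (hj₀ : j₀ = a ∨ j₀ = b) (j : Fin n) :
    permColSum (Pi.mulSingle i₀ (swap a b)) j ≠ m * j₀ := by
  intro h
  have := Int.eq_and_eq_of_mul_add_eq_mul_add (m := m) (x := j) (y := j₀) (e := 0)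
    (by rw [← permColSum_mulSingle, h]; push_cast; ring)
    (by have := abs_le.1 (abs_swap_apply_sub_le_one hab j); rw [abs_lt]; omega)
  obtain ⟨rfl, hfix⟩ : j = j₀ ∧ swap a b j = j :=
    ⟨Fin.ext (by exact_mod_cast this.1), Fin.ext (by omega)⟩
  exact swap_apply_ne_self_iff.2 ⟨fun h => by simp [h] at hab, hj₀⟩ hfix

theorem permColSum_add_le (π : Fin m → Perm (Fin n)) (j : Fin n) :
    permColSum π j + m ≤ m * n := by
  have := sum_le_sum (s := univ) (f := fun i => (π i j : ℕ) + 1) (g := fun _ => n)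
    fun i _ => (π i j).isLt
  simpa [permColSum, sum_add_distrib, mul_comm] using this

/-- Row `i` holds the block `n i + 1, …, n i + n`, in the order given by `π i`. -/
def rowBlockEquiv (π : Fin m → Perm (Fin n)) : Fin m × Fin n ≃ Fin (m * n) :=
  (Equiv.prodShear (Equiv.refl _) π).trans finProdFinEquiv

theorem rowBlockEquiv_apply_val (π : Fin m → Perm (Fin n)) (i : Fin m) (j : Fin n) :
    (rowBlockEquiv π (i, j) : ℕ) = π i j + n * i := by
  simp [rowBlockEquiv]

theorem sum_rowBlockEquiv_row (π : Fin m → Perm (Fin n)) (i : Fin m) :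
    ∑ j, ((rowBlockEquiv π (i, j) : ℕ) + 1) = n * (n * i) + ∑ j ∈ range n, (j + 1) := by
  rw [sum_congr rfl fun j _ => by rw [rowBlockEquiv_apply_val, add_right_comm], sum_add_distrib,
    Equiv.sum_comp (π i) (fun j => (j : ℕ) + 1), Fin.sum_univ_eq_sum_range (· + 1), sum_const,
    card_univ, Fintype.card_fin, smul_eq_mul, add_comm]

theorem sum_rowBlockEquiv_col (π : Fin m → Perm (Fin n)) (j : Fin n) :
    ∑ i, ((rowBlockEquiv π (i, j) : ℕ) + 1) = ∑ i ∈ range m, (n * i + 1) + permColSum π j := by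
  rw [sum_congr rfl fun i _ => show (rowBlockEquiv π (i, j) : ℕ) + 1 = n * i + 1 + π i j by
      rw [rowBlockEquiv_apply_val]; ring, sum_add_distrib,
    Fin.sum_univ_eq_sum_range (fun i => n * i + 1), permColSum]

theorem hasAntimagicArray_of_perms (hn : 0 < n) (π : Fin m → Perm (Fin n))
    (hπ : Injective (permColSum π))
    (hπ' : ∀ (i : Fin m) (j : Fin n), n * (n * (i : ℕ)) + ∑ j ∈ range n, (j + 1) ≠
      ∑ i ∈ range m, (n * i + 1) + permColSum π j) :
    HasAntimagicArray (Fin m) (Fin n) := by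
  refine ⟨_, rowBlockEquiv π, ?_⟩
  have hsums : lineSums (fun p => (rowBlockEquiv π p : ℕ) + 1) =
      Sum.elim (fun i : Fin m => n * (n * (i : ℕ)) + ∑ j ∈ range n, (j + 1))
        (fun j => ∑ i ∈ range m, (n * i + 1) + permColSum π j) := by
    ext (i | j)
    · exact sum_rowBlockEquiv_row π i
    · exact sum_rowBlockEquiv_col π j
  rw [hsums]
  refine Injective.sumElim (fun i i' h => Fin.ext ?_) ((add_right_injective _).comp hπ) hπ'
  simpa [hn.ne'] using h

end RowBlocks

theorem hasAntimagicArray_fin_one {n : ℕ} (hn : 2 ≤ n) : HasAntimagicArray (Fin 1) (Fin n) := by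
  refine hasAntimagicArray_of_perms (by omega) 1 (fun j j' h => ?_) fun i j h => ?_
  · simpa [permColSum_one, Fin.ext_iff] using h
  · have := two_mul_sum_range_add_one n
    simp only [Fin.val_eq_zero i, mul_zero, zero_add, sum_range_one, permColSum_one] at h
    nlinarith [j.isLt]

theorem hasAntimagicArray_fin_two {n : ℕ} (hn : 1 ≤ n) : HasAntimagicArray (Fin n) (Fin 2) := by
  refine hasAntimagicArray_of_perms (by omega) 1 (fun j j' h => ?_) fun i j h => ?_
  · simp only [permColSum_one] at h
    exact Fin.ext (Nat.eq_of_mul_eq_mul_left hn h)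
  · rw [sum_range_two_mul_add_one, permColSum_one] at h
    -- rows are `≡ 3 (mod 4)`, columns `n²` and `n² + n` are not
    have h4 := congrArg (fun x : ℕ => (x : ZMod 4)) h
    simp only [sum_range_succ, sum_range_zero] at h4
    push_cast at h4
    fin_cases j <;> revert h4 <;> generalize (n : ZMod 4) = x <;> generalize (i : ZMod 4) = y <;>
      revert x y <;> decide

theorem exists_perms_injective_permColSum_ne {m n : ℕ} (hm : 3 ≤ m) (hn : 2 ≤ n) (F : ℕ) :
    ∃ π : Fin m → Perm (Fin n), Injective (permColSum π) ∧ ∀ j, permColSum π j ≠ F := by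
  rcases em (∃ j₀ : Fin n, F = m * j₀) with ⟨j₀, rfl⟩ | hF
  · obtain ⟨a, b, hab, hj₀⟩ : ∃ a b : Fin n, (b : ℕ) = a + 1 ∧ (j₀ = a ∨ j₀ = b) := by
      by_cases h : (j₀ : ℕ) + 1 < n
      · exact ⟨j₀, ⟨j₀ + 1, h⟩, rfl, .inl rfl⟩
      · exact ⟨⟨j₀ - 1, by omega⟩, j₀, by simp; omega, .inr rfl⟩
    exact ⟨Pi.mulSingle ⟨0, by omega⟩ (swap a b), injective_permColSum_mulSingle_swap hm _ hab,
      permColSum_mulSingle_swap_ne (by omega) _ hab hj₀⟩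
  · push Not at hF
    refine ⟨1, fun j j' h => Fin.ext ?_, fun j h => hF j (by rw [← h, permColSum_one])⟩
    rw [permColSum_one, permColSum_one] at h
    exact Nat.eq_of_mul_eq_mul_left (by omega) h

theorem hasAntimagicArray_of_three_le {m n : ℕ} (hm : 3 ≤ m) (hmn : m ≤ n) :
    HasAntimagicArray (Fin m) (Fin n) := by
  set c := ∑ j ∈ range n, (j + 1)
  set d := ∑ i ∈ range m, (n * i + 1)
  -- consecutive row sums differ by `n²`, more than the spread of the column sums
  obtain ⟨F, hF⟩ : ∃ F, ∀ (i : Fin m) s, s < n * n → n * (n * (i : ℕ)) + c = d + s → s = F := by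
    by_cases h : ∃ (k : Fin m) (s : ℕ), s < n * n ∧ n * (n * (k : ℕ)) + c = d + s
    · obtain ⟨k, F, hF, hk⟩ := h
      refine ⟨F, fun i s hs hi => ?_⟩
      have hi' := congrArg (Nat.cast : ℕ → ℤ) hi
      have hk' := congrArg (Nat.cast : ℕ → ℤ) hk
      push_cast at hi' hk'
      have := Int.eq_and_eq_of_mul_add_eq_mul_add (m := ((n * n : ℕ) : ℤ)) (x := i) (y := k)
        (d := F) (e := s) (by push_cast; linarith) (abs_sub_lt_iff.2 ⟨by omega, by omega⟩)
      omega
    · push Not at h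
      exact ⟨0, fun i s hs hi => absurd hi (h i s hs)⟩
  obtain ⟨π, hπ, hπF⟩ := exists_perms_injective_permColSum_ne (n := n) hm (by omega) F
  refine hasAntimagicArray_of_perms (by omega) π hπ fun i j h => hπF j (hF i _ ?_ h)
  have := permColSum_add_le π j
  nlinarith [Nat.mul_le_mul_right n hmn]

theorem stmt3 (m n : ℕ) (hm : 1 ≤ m) (hn : 1 ≤ n) (hmn : 3 ≤ m + n) :
    (completeBipartiteGraph (Fin m) (Fin n)).IsAntimagic := by
  suffices h : ∀ p q, 1 ≤ p → p ≤ q → 3 ≤ p + q → HasAntimagicArray (Fin p) (Fin q) by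
    rcases le_total m n with hle | hle
    · exact (h m n hm hle hmn).isAntimagic
    · exact (h n m hn hle (by omega)).swap.isAntimagic
  intro p q hp hpq hpq3
  rcases (show p = 1 ∨ p = 2 ∨ 3 ≤ p by omega) with rfl | rfl | hp3
  · exact hasAntimagicArray_fin_one (by omega)
  · exact (hasAntimagicArray_fin_two (by omega)).swap
  · exact hasAntimagicArray_of_three_le hp3 hpq
end

section
/- Every graph G has a spanning subforest F (an acyclic set of edges) such that removing the edges of F from G leaves a graph in which every vertex has even degree. -/
/-!
Let `H` be a maximal subgraph of `G` all of whose degrees are even, and put `F = G \ H`, so that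
`G \ F = H`. A cycle in `F` would be an even graph edge-disjoint from `H`, and adding it to `H`
would give a strictly larger even subgraph of `G`; hence `F` is acyclic.
-/

namespace SimpleGraph

variable {V : Type*} {G H : SimpleGraph V}

/-- Degrees are counted with `Set.ncard`, which is `0` on infinite sets; on a finite vertex type
this is the usual degree. -/
def IsEven (G : SimpleGraph V) : Prop :=
  ∀ v, Even (G.neighborSet v).ncard

lemma degree_eq_ncard_neighborSet (v : V) [Fintype (G.neighborSet v)] :
    G.degree v = (G.neighborSet v).ncard := by
  rw [← card_neighborSet_eq_degree, Set.ncard_eq_toFinset_card', Set.toFinset_card]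

lemma isEven_bot : (⊥ : SimpleGraph V).IsEven := fun v => by simp

lemma IsCycles.isEven (hG : G.IsCycles) : G.IsEven := by
  intro v
  rcases (G.neighborSet v).eq_empty_or_nonempty with h | h
  · simp [h]
  · simp [hG h]

lemma IsEven.sup [Finite V] (hG : G.IsEven) (hH : H.IsEven) (h : Disjoint G H) :
    (G ⊔ H).IsEven := by
  intro v
  rw [neighborSet_sup, Set.ncard_union_eq (disjoint_neighborSet.mpr h v)]
  exact (hG v).add (hH v)

lemma Walk.IsCycle.spanningCoe_toSubgraph_ne_bot {v : V} {c : G.Walk v v} (hc : c.IsCycle) :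
    c.toSubgraph.spanningCoe ≠ ⊥ :=
  ne_bot_iff_exists_adj.mpr ⟨v, c.snd, c.toSubgraph_adj_snd hc.not_nil⟩

lemma exists_maximal_isEven_le [Finite V] (G : SimpleGraph V) :
    ∃ H, Maximal (fun H => H ≤ G ∧ H.IsEven) H :=
  (Set.toFinite {H | H ≤ G ∧ H.IsEven}).exists_maximal ⟨⊥, bot_le, isEven_bot⟩

lemma isAcyclic_sdiff_of_maximal_isEven [Finite V]
    (hH : Maximal (fun H => H ≤ G ∧ H.IsEven) H) : (G \ H).IsAcyclic := by
  intro v c hc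
  set C := c.toSubgraph.spanningCoe
  have hCG : C ≤ G \ H := c.toSubgraph.spanningCoe_le
  have hHC : Disjoint H C := disjoint_sdiff_self_right.mono_right hCG
  have hsup : H ⊔ C ≤ G ∧ (H ⊔ C).IsEven :=
    ⟨sup_le hH.1.1 (hCG.trans sdiff_le), hH.1.2.sup hc.isCycles_spanningCoe_toSubgraph.isEven hHC⟩
  have hCH : C ≤ H := le_sup_right.trans (hH.2 hsup le_sup_left)
  exact hc.spanningCoe_toSubgraph_ne_bot (hHC.eq_bot_of_ge hCH)

end SimpleGraph

open Classical in
theorem stmt7 {V : Type*} [Fintype V] (G : SimpleGraph V) :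
    ∃ F : SimpleGraph V, F ≤ G ∧ F.IsAcyclic ∧
      ∀ v : V, Even ((G \ F).degree v) := by
  obtain ⟨H, hH⟩ := G.exists_maximal_isEven_le
  refine ⟨G \ H, sdiff_le, SimpleGraph.isAcyclic_sdiff_of_maximal_isEven hH, fun v => ?_⟩
  rw [SimpleGraph.degree_eq_ncard_neighborSet, sdiff_sdiff_eq_self hH.1.1]
  exact hH.1.2 v
end

section
/- The complete graph K_n is antimagic for every n ≥ 3. -/
open Finset

namespace Nat

theorem choose_two_add_lt_choose_two {a b c : ℕ} (hab : a < b) (hbc : b < c) :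
    b.choose 2 + a < c.choose 2 := by
  have hsucc : (b + 1).choose 2 = b.choose 2 + b := by
    rw [choose_succ_succ', choose_one_right, add_comm]
  have : (b + 1).choose 2 ≤ c.choose 2 := choose_le_choose 2 hbc
  omega

end Nat

namespace Sym2

/-- The position of a 2-subset `{a, b}` of `ℕ` in the colexicographic order, counted from `1`
(meaningful only off the diagonal). -/
def colexRank (e : Sym2 ℕ) : ℕ := e.sup.choose 2 + e.inf + 1

theorem colexRank_mk_of_lt {a b : ℕ} (h : a < b) : colexRank s(a, b) = b.choose 2 + a + 1 := by
  simp [colexRank, h.le]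

theorem colexRank_mk_comm (a b : ℕ) : colexRank s(a, b) = colexRank s(b, a) := by
  rw [eq_swap]

theorem colexRank_mk_le_choose_two {a b n : ℕ} (hab : a < b) (hbn : b < n) :
    colexRank s(a, b) ≤ n.choose 2 := by
  rw [colexRank_mk_of_lt hab]
  exact Nat.choose_two_add_lt_choose_two hab hbn

theorem inf_lt_sup_iff_not_isDiag {α : Type*} [LinearOrder α] {e : Sym2 α} :
    e.inf < e.sup ↔ ¬ e.IsDiag := by
  induction e using Sym2.ind with
  | _ a b => simp [mk_isDiag_iff, eq_comm]

theorem colexRank_injOn : Set.InjOn colexRank diagSetᶜ := by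
  intro e he e' he' h
  rw [← inf_eq_inf_and_sup_eq_sup]
  have hlt := inf_lt_sup_iff_not_isDiag.2 he
  have hlt' := inf_lt_sup_iff_not_isDiag.2 he'
  simp only [colexRank] at h
  rcases lt_trichotomy e.sup e'.sup with hsup | hsup | hsup
  · have := Nat.choose_two_add_lt_choose_two hlt hsup; omega
  · rw [hsup] at h ⊢; omega
  · have := Nat.choose_two_add_lt_choose_two hlt' hsup; omega

theorem colexRank_mk_lt_colexRank_mk_left {a a' c : ℕ} (h : a < a') (hca : c ≠ a)
    (hca' : c ≠ a') : colexRank s(a, c) < colexRank s(a', c) := by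
  rcases lt_or_gt_of_ne hca with hc | hc
  · rw [colexRank_mk_comm, colexRank_mk_of_lt hc, colexRank_mk_comm,
      colexRank_mk_of_lt (hc.trans h)]
    have := Nat.choose_two_add_lt_choose_two hc h
    omega
  rcases lt_or_gt_of_ne hca' with hc' | hc'
  · rw [colexRank_mk_of_lt hc, colexRank_mk_comm, colexRank_mk_of_lt hc']
    have := Nat.choose_two_add_lt_choose_two hc hc'
    omega
  · rw [colexRank_mk_of_lt hc, colexRank_mk_of_lt hc']
    omega

theorem bijOn_colexRank_map_val (n : ℕ) :
    Set.BijOn (fun e : Sym2 (Fin n) => (e.map Fin.val).colexRank) diagSetᶜ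
      (Icc 1 (n.choose 2)) := by
  have hmaps : Set.MapsTo (fun e : Sym2 (Fin n) => (e.map Fin.val).colexRank) diagSetᶜ
      (Icc 1 (n.choose 2)) := by
    intro e he
    induction e using Sym2.ind with
    | _ i j =>
      have hij : (i : ℕ) ≠ j := Fin.val_injective.ne (by simpa [mk_isDiag_iff] using he)
      simp only [map_mk, coe_Icc, Set.mem_Icc]
      refine ⟨by simp [colexRank], ?_⟩
      rcases lt_or_gt_of_ne hij with h | h
      · exact colexRank_mk_le_choose_two h j.isLt
      · exact colexRank_mk_comm _ _ ▸ colexRank_mk_le_choose_two h i.isLt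
  have hinj : Set.InjOn (fun e : Sym2 (Fin n) => (e.map Fin.val).colexRank) diagSetᶜ :=
    colexRank_injOn.comp (map.injective Fin.val_injective).injOn
      fun e he => (isDiag_map Fin.val_injective).not.2 he
  refine ⟨hmaps, hinj, ?_⟩
  rw [← Set.coe_toFinset diagSetᶜ] at hmaps hinj ⊢
  refine surjOn_of_injOn_of_card_le _ hmaps hinj ?_
  rw [Set.toFinset_card, card_diagSet_compl, Fintype.card_fin, Nat.card_Icc, Nat.add_sub_cancel]

end Sym2

theorem Finset.strictMono_sum_compl_singleton {V M : Type*} [Fintype V] [LinearOrder V]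
    [AddCommMonoid M] [PartialOrder M] [IsOrderedCancelAddMonoid M] {g : V → V → M}
    (hg : ∀ v w, g v w = g w v) (hmono : ∀ ⦃u v w⦄, u < v → w ≠ u → w ≠ v → g u w < g v w)
    (hV : 3 ≤ Fintype.card V) : StrictMono fun v => ∑ w ∈ {v}ᶜ, g v w := by
  intro u v huv
  have hsplit : ∀ x y : V, x ≠ y → ({x}ᶜ : Finset V) = insert y {x, y}ᶜ := fun x y _ => by
    ext z
    grind [mem_compl]
  have hrest : ({u, v}ᶜ : Finset V).Nonempty := by
    rw [← card_pos, card_compl, card_pair huv.ne]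
    omega
  dsimp only
  rw [hsplit u v huv.ne, hsplit v u huv.ne', pair_comm v u, sum_insert (by simp),
    sum_insert (by simp), hg u v]
  exact (add_lt_add_iff_left _).2 <| sum_lt_sum_of_nonempty hrest fun w hw =>
    hmono huv (by simp_all) (by simp_all)

namespace SimpleGraph

theorem sum_incidenceFinset_eq_sum_neighborFinset {V M : Type*} [DecidableEq V] [AddCommMonoid M]
    (G : SimpleGraph V) (v : V) [Fintype (G.neighborSet v)] (f : Sym2 V → M) :
    ∑ e ∈ G.incidenceFinset v, f e = ∑ w ∈ G.neighborFinset v, f s(v, w) := by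
  have himage : G.incidenceFinset v = (G.neighborFinset v).image (fun w => s(v, w)) := by
    ext e
    simp only [mem_incidenceFinset, mem_image, mem_neighborFinset]
    refine ⟨fun he => ?_, ?_⟩
    · induction e using Sym2.ind with
      | _ a b =>
        obtain ⟨hab, rfl | rfl⟩ := G.mk'_mem_incidenceSet_iff.1 he
        exacts [⟨b, hab, rfl⟩, ⟨a, hab.symm, Sym2.eq_swap⟩]
    · rintro ⟨w, hvw, rfl⟩
      exact (G.mem_incidenceSet v w).2 hvw
  rw [himage, sum_image fun _ _ _ _ h => Sym2.congr_right.mp h]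

end SimpleGraph

theorem stmt10 (n : ℕ) (hn : 3 ≤ n) : (SimpleGraph.completeGraph (Fin n)).IsAntimagic := by
  refine ⟨fun e => (e.map Fin.val).colexRank, ?_, fun v w h => ?_⟩
  -- `convert` absorbs the classical instances that `IsAntimagic` is stated with.
  · convert Sym2.bijOn_colexRank_map_val n
    · simp
    · convert SimpleGraph.card_edgeFinset_top_eq_card_choose_two (V := Fin n)
      exact (Fintype.card_fin n).symm
  · simp only [SimpleGraph.sum_incidenceFinset_eq_sum_neighborFinset, Sym2.map_mk] at h
    refine (strictMono_sum_compl_singleton (g := fun i j : Fin n => Sym2.colexRank s(↑i, ↑j))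
      (fun _ _ => Sym2.colexRank_mk_comm _ _) (fun u v w huv hwu hwv => ?_) ?_).injective ?_
    · exact Sym2.colexRank_mk_lt_colexRank_mk_left huv (Fin.val_injective.ne hwu)
        (Fin.val_injective.ne hwv)
    · rwa [Fintype.card_fin]
    · convert h using 2 <;> ext <;> simp [eq_comm]
end

section
/- Let G be a graph on n vertices with m edges and a vertex v of degree n-1 with neighbors v_1, ..., v_{n-1}. Given any assignment of distinct labels 1,...,m-n+1 to the edges not incident with v, order the neighbors so that their partial sums w'(v_1) ≤ ... ≤ w'(v_{n-1}) are nondecreasing, and assign label m-n+1+i to edge (v, v_i). Then the resulting vertex sums w(v_i) = w'(v_i) + m - n + 1 + i are strictly increasing in i, and w(v) = (n-1)(m-n+1) + n(n-1)/2 exceeds every w(v_i). -/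
/-!
Each edge at `u i` other than `(v, u i)` avoids `v` and so carries a label at most
`L = m - n + 1`; as `u i` has at most `n - 2` such edges, `w(u i) ≤ (n - 2) L + L + (n - 1)`,
while `w v = (n - 1) L + n (n - 1) / 2`. The surplus `n (n - 1) / 2 > n - 1` needs `n ≥ 3`, which
holds because some edge avoids `v` (it carries the label `1`).
-/

namespace SimpleGraph

theorem three_le_card_of_mem_edgeSet_of_notMem {V : Type*} [Fintype V] (G : SimpleGraph V)
    {e : Sym2 V} {v : V} (he : e ∈ G.edgeSet) (hv : v ∉ e) : 3 ≤ Fintype.card V := by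
  classical
  induction e using Sym2.ind with
  | h a b =>
    have hab : a ≠ b := G.ne_of_adj he
    simp only [Sym2.mem_iff, not_or] at hv
    have hcard : ({v, a, b} : Finset V).card = 3 := by
      rw [Finset.card_insert_of_notMem (by simp [hv.1, hv.2]),
        Finset.card_insert_of_notMem (by simp [hab]), Finset.card_singleton]
    exact hcard ▸ Finset.card_le_univ _

variable {V : Type*} [Fintype V] [DecidableEq V] (G : SimpleGraph V) [DecidableRel G.Adj]

theorem card_incidenceFinset_filter_notMem_le {u v : V} (huv : G.Adj v u) :
    ((G.incidenceFinset u).filter (fun e => v ∉ e)).card ≤ G.degree u - 1 := by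
  have hmem : s(v, u) ∈ G.incidenceFinset u := by
    rw [mem_incidenceFinset]
    exact ⟨huv, Sym2.mem_mk_right v u⟩
  have hsub : (G.incidenceFinset u).filter (fun e => v ∉ e) ⊆
      (G.incidenceFinset u).erase s(v, u) := fun e he => by
      rw [Finset.mem_filter] at he
      exact Finset.mem_erase.mpr ⟨by rintro rfl; exact he.2 (Sym2.mem_mk_left v u), he.1⟩
  calc _ ≤ ((G.incidenceFinset u).erase s(v, u)).card := Finset.card_le_card hsub
    _ = G.degree u - 1 := by
      rw [Finset.card_erase_of_mem hmem, card_incidenceFinset_eq_degree]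

theorem sum_incidenceFinset_filter_notMem_le {f : Sym2 V → ℕ} {L : ℕ} {u v : V}
    (hf : ∀ e ∈ G.edgeFinset.filter (fun e => v ∉ e), f e ≤ L) (huv : G.Adj v u) :
    ∑ e ∈ (G.incidenceFinset u).filter (fun e => v ∉ e), f e ≤
      (Fintype.card V - 2) * L := by
  have hcard : ((G.incidenceFinset u).filter (fun e => v ∉ e)).card ≤ Fintype.card V - 2 := by
    have := G.card_incidenceFinset_filter_notMem_le huv
    have := G.degree_lt_card_verts u
    omega
  calc _ ≤ ((G.incidenceFinset u).filter (fun e => v ∉ e)).card * L := by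
        refine Finset.sum_le_card_nsmul _ _ _ fun e he => hf e ?_
        rw [Finset.mem_filter, mem_incidenceFinset] at he
        rw [Finset.mem_filter, mem_edgeFinset]
        exact ⟨he.1.1, he.2⟩
    _ ≤ (Fintype.card V - 2) * L := Nat.mul_le_mul_right _ hcard

end SimpleGraph

theorem Nat.sub_one_lt_mul_sub_one_div_two {n : ℕ} (hn : 3 ≤ n) : n - 1 < n * (n - 1) / 2 := by
  obtain ⟨k, rfl⟩ := Nat.exists_eq_add_of_le hn
  rw [Nat.lt_iff_add_one_le, Nat.le_div_iff_mul_le (by norm_num),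
    show 3 + k - 1 = k + 2 by omega]
  nlinarith

theorem stmt17_general {V : Type*} [Fintype V] [DecidableEq V] (G : SimpleGraph V)
    [DecidableRel G.Adj] (n m : ℕ) (hn : n = Fintype.card V)
    (v : V)
    (f₀ : Sym2 V → ℕ)
    (hbij : Set.BijOn f₀ ↑(G.edgeFinset.filter (fun e => v ∉ e))
      ↑(Finset.Icc 1 (m - n + 1)))
    (u : Fin (n - 1) → V)
    (huv : ∀ i, G.Adj v (u i))
    (hmono : Monotone (fun i : Fin (n - 1) =>
      ∑ e ∈ (G.incidenceFinset (u i)).filter (fun e => v ∉ e), f₀ e)) :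
    StrictMono (fun i : Fin (n - 1) =>
      (∑ e ∈ (G.incidenceFinset (u i)).filter (fun e => v ∉ e), f₀ e) +
        (m - n + 1) + (i.val + 1)) ∧
    ∀ i : Fin (n - 1),
      (∑ e ∈ (G.incidenceFinset (u i)).filter (fun e => v ∉ e), f₀ e) +
          (m - n + 1) + (i.val + 1) <
        (n - 1) * (m - n + 1) + n * (n - 1) / 2 := by
  refine ⟨(hmono.add_const _).add_strictMono (Fin.val_strictMono.add_const 1), fun i => ?_⟩
  obtain ⟨e, he, -⟩ := hbij.surjOn (by simp : 1 ∈ (↑(Finset.Icc 1 (m - n + 1)) : Set ℕ))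
  rw [Finset.mem_coe, Finset.mem_filter, SimpleGraph.mem_edgeFinset] at he
  have hn3 : 3 ≤ n := hn ▸ G.three_le_card_of_mem_edgeSet_of_notMem he.1 he.2
  have hsum := G.sum_incidenceFinset_filter_notMem_le
    (fun e he => (Finset.mem_Icc.mp (hbij.mapsTo he)).2) (huv i)
  rw [← hn] at hsum
  have hsurplus := Nat.sub_one_lt_mul_sub_one_div_two hn3
  have hfactor : (n - 2) * (m - n + 1) + (m - n + 1) = (n - 1) * (m - n + 1) := by
    rw [← Nat.succ_mul]; congr 1; omega
  have hi : i.val + 1 ≤ n - 1 := i.2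
  omega

/-- Lemma 4.1 construction: with `v` of degree `n-1`, labels `1,…,m-n+1` placed
bijectively on the edges not incident with `v`, partial sums `w'` of the neighbors
`u 0, …, u (n-2)` nondecreasing, and label `m-n+1+(i+1)` placed on the edge
`(v, u i)`, the resulting total sums `w (u i) = w' (u i) + (m-n+1) + (i+1)` are
strictly increasing, and `w v = (n-1)(m-n+1) + n(n-1)/2` exceeds all of them. -/
theorem stmt17 {V : Type*} [Fintype V] [DecidableEq V] (G : SimpleGraph V)
    [DecidableRel G.Adj] (n m : ℕ) (hn : n = Fintype.card V) (hn2 : 2 ≤ n)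
    (hm : m = G.edgeFinset.card)
    (v : V) (hv : G.degree v = n - 1)
    (f₀ : Sym2 V → ℕ)
    (hbij : Set.BijOn f₀ ↑(G.edgeFinset.filter (fun e => v ∉ e))
      ↑(Finset.Icc 1 (m - n + 1)))
    (u : Fin (n - 1) → V) (huinj : Function.Injective u)
    (huv : ∀ i, G.Adj v (u i))
    (hmono : Monotone (fun i : Fin (n - 1) =>
      ∑ e ∈ (G.incidenceFinset (u i)).filter (fun e => v ∉ e), f₀ e)) :
    StrictMono (fun i : Fin (n - 1) =>
      (∑ e ∈ (G.incidenceFinset (u i)).filter (fun e => v ∉ e), f₀ e) +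
        (m - n + 1) + (i.val + 1)) ∧
    ∀ i : Fin (n - 1),
      (∑ e ∈ (G.incidenceFinset (u i)).filter (fun e => v ∉ e), f₀ e) +
          (m - n + 1) + (i.val + 1) <
        (n - 1) * (m - n + 1) + n * (n - 1) / 2 :=
  stmt17_general G n m hn v f₀ hbij u huv hmono
end
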